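/- In a series-parallel dag with the DePa labeling, for every vertex v and every prefix p of the fork-path f(v), there exists a vertex c with f(c) = p and d(c) ≤ d(v) such that c ≼ v. -/

import Mathlib

/-- Series-parallel dag shapes: a single vertex, serial composition
(identifying the sink of `g1` with the source of `g2`), or parallel
composition (fresh source with edges to the sources of `g1`, `g2`, and a
fresh sink with edges from their sinks). -/
inductive SP : Type where
  | vert : SP
  | seq : SP → SP → SP
  | par : SP → SP → SP

/-- Non-source vertices of a series-parallel dag. -/
def NV : SP → Type
  | .vert => Empty
  | .seq g1 g2 => NV g1 ⊕ NV g2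
  | .par g1 g2 => ((Unit ⊕ NV g1) ⊕ (Unit ⊕ NV g2)) ⊕ Unit

/-- Vertices: the source, or a non-source vertex. -/
abbrev V (g : SP) : Type := Unit ⊕ NV g

/-- The (unique) source of a series-parallel dag. -/
def src (g : SP) : V g := Sum.inl ()

/-- Embedding of the first component of a serial composition. -/
def emb1 (g1 g2 : SP) : V g1 → V (.seq g1 g2)
  | .inl _ => Sum.inl ()
  | .inr n => Sum.inr (Sum.inl n)

/-- The (unique) sink of a series-parallel dag. -/
def snk : (g : SP) → V g
  | .vert => Sum.inl ()
  | .seq g1 g2 =>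
    match snk g2 with
    | .inl _ => emb1 g1 g2 (snk g1)
    | .inr n => Sum.inr (Sum.inr n)
  | .par _ _ => Sum.inr (Sum.inr ())

/-- Embedding of the second component of a serial composition:
the source of `g2` is identified with the sink of `g1`. -/
def emb2 (g1 g2 : SP) : V g2 → V (.seq g1 g2)
  | .inl _ => emb1 g1 g2 (snk g1)
  | .inr n => Sum.inr (Sum.inr n)

/-- Embedding of the left branch of a parallel composition. -/
def embL (g1 g2 : SP) (v : V g1) : V (.par g1 g2) := Sum.inr (Sum.inl (Sum.inl v))

/-- Embedding of the right branch of a parallel composition. -/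
def embR (g1 g2 : SP) (v : V g2) : V (.par g1 g2) := Sum.inr (Sum.inl (Sum.inr v))

/-- Edges of a series-parallel dag. -/
def Edge : (g : SP) → V g → V g → Prop
  | .vert, _, _ => False
  | .seq g1 g2, u, v =>
      (∃ a b, Edge g1 a b ∧ u = emb1 g1 g2 a ∧ v = emb1 g1 g2 b) ∨
      (∃ a b, Edge g2 a b ∧ u = emb2 g1 g2 a ∧ v = emb2 g1 g2 b)
  | .par g1 g2, u, v =>
      (∃ a b, Edge g1 a b ∧ u = embL g1 g2 a ∧ v = embL g1 g2 b) ∨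
      (∃ a b, Edge g2 a b ∧ u = embR g1 g2 a ∧ v = embR g1 g2 b) ∨
      (u = src (.par g1 g2) ∧ v = embL g1 g2 (src g1)) ∨
      (u = src (.par g1 g2) ∧ v = embR g1 g2 (src g2)) ∨
      (u = embL g1 g2 (snk g1) ∧ v = snk (.par g1 g2)) ∨
      (u = embR g1 g2 (snk g2) ∧ v = snk (.par g1 g2))

/-- `Reach g u v` (`u ≼ v`): there is a directed path (possibly empty) from `u` to `v`. -/
def Reach (g : SP) : V g → V g → Prop := Relation.ReflTransGen (Edge g)

/-- The dag-depth of a vertex (the length of a longest path ending at it),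
computed by the DePa rules: the source has depth 0; at a fork both children
have depth one greater; at a join the new vertex has depth
`1 + max` of the depths of the joining vertices. -/
def depth : (g : SP) → V g → ℕ
  | .vert, _ => 0
  | .seq _ _, .inl _ => 0
  | .seq g1 _, .inr (.inl n) => depth g1 (Sum.inr n)
  | .seq g1 g2, .inr (.inr n) => depth g1 (snk g1) + depth g2 (Sum.inr n)
  | .par _ _, .inl _ => 0
  | .par g1 _, .inr (.inl (.inl v)) => 1 + depth g1 v
  | .par _ g2, .inr (.inl (.inr v)) => 1 + depth g2 v
  | .par g1 g2, .inr (.inr _) => 1 + max (1 + depth g1 (snk g1)) (1 + depth g2 (snk g2))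

/-- The fork-path of a vertex, as a list of bits (`false` = L, `true` = R),
outermost fork first: the root has the empty path, a fork extends the path by
L and R for the two branches, and a join restores the common prefix. -/
def fpath : (g : SP) → V g → List Bool
  | .vert, _ => []
  | .seq _ _, .inl _ => []
  | .seq g1 _, .inr (.inl n) => fpath g1 (Sum.inr n)
  | .seq _ g2, .inr (.inr n) => fpath g2 (Sum.inr n)
  | .par _ _, .inl _ => []
  | .par g1 _, .inr (.inl (.inl v)) => false :: fpath g1 v
  | .par _ g2, .inr (.inl (.inr v)) => true :: fpath g2 v
  | .par _ _, .inr (.inr _) => []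

/-- Longest common prefix of two lists. -/
def lcp : List Bool → List Bool → List Bool
  | a :: as, b :: bs => if a = b then a :: lcp as bs else []
  | _, _ => []

/-
The source has the empty fork-path, depth 0 and reaches every vertex, so it serves the empty
prefix. A nonempty prefix of `f(v)` can only occur when `v` lies strictly inside a branch of a
parallel composition (the new source and sink have the empty path), and serial composition
leaves fork-paths unchanged and shifts the depths of the second component by a constant; in each
case the ancestor is found inside the component containing `v` and carried over by the embedding.
-/

lemma fpath_src (g : SP) : fpath g (src g) = [] := by cases g <;> rfl

lemma depth_src (g : SP) : depth g (src g) = 0 := by cases g <;> rfl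

lemma fpath_emb1 (g1 g2 : SP) (a : V g1) : fpath (.seq g1 g2) (emb1 g1 g2 a) = fpath g1 a := by
  rcases a with _ | _
  exacts [(fpath_src g1).symm, rfl]

lemma depth_emb1 (g1 g2 : SP) (a : V g1) : depth (.seq g1 g2) (emb1 g1 g2 a) = depth g1 a := by
  rcases a with _ | _
  exacts [(depth_src g1).symm, rfl]

lemma fpath_snk (g : SP) : fpath g (snk g) = [] := by
  induction g with
  | vert => rfl
  | seq g1 g2 ih1 ih2 =>
    unfold snk
    split
    next => rw [fpath_emb1, ih1]
    next n h => exact (congrArg (fpath g2) h).symm.trans ih2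
  | par => rfl

lemma fpath_emb2 (g1 g2 : SP) (b : V g2) : fpath (.seq g1 g2) (emb2 g1 g2 b) = fpath g2 b := by
  rcases b with _ | _
  · exact (fpath_emb1 g1 g2 (snk g1)).trans ((fpath_snk g1).trans (fpath_src g2).symm)
  · rfl

lemma depth_emb2 (g1 g2 : SP) (b : V g2) :
    depth (.seq g1 g2) (emb2 g1 g2 b) = depth g1 (snk g1) + depth g2 b := by
  rcases b with _ | _
  · show depth _ (emb1 g1 g2 (snk g1)) = depth g1 (snk g1) + depth g2 (src g2)
    rw [depth_emb1, depth_src, add_zero]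
  · rfl

lemma seq_vertex_cases {g1 g2 : SP} (v : V (.seq g1 g2)) :
    (∃ a, v = emb1 g1 g2 a) ∨ ∃ b, v = emb2 g1 g2 b := by
  rcases v with _ | a | b
  exacts [.inl ⟨src g1, rfl⟩, .inl ⟨.inr a, rfl⟩, .inr ⟨.inr b, rfl⟩]

section Reach

variable {g1 g2 : SP}

lemma reach_emb1 {a b : V g1} (h : Reach g1 a b) :
    Reach (.seq g1 g2) (emb1 g1 g2 a) (emb1 g1 g2 b) :=
  h.lift _ fun _ _ hab => .inl ⟨_, _, hab, rfl, rfl⟩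

lemma reach_emb2 {a b : V g2} (h : Reach g2 a b) :
    Reach (.seq g1 g2) (emb2 g1 g2 a) (emb2 g1 g2 b) :=
  h.lift _ fun _ _ hab => .inr ⟨_, _, hab, rfl, rfl⟩

lemma reach_embL {a b : V g1} (h : Reach g1 a b) :
    Reach (.par g1 g2) (embL g1 g2 a) (embL g1 g2 b) :=
  h.lift _ fun _ _ hab => .inl ⟨_, _, hab, rfl, rfl⟩

lemma reach_embR {a b : V g2} (h : Reach g2 a b) :
    Reach (.par g1 g2) (embR g1 g2 a) (embR g1 g2 b) :=
  h.lift _ fun _ _ hab => .inr <| .inl ⟨_, _, hab, rfl, rfl⟩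

lemma reach_src_embL (a : V g1) (h : Reach g1 (src g1) a) :
    Reach (.par g1 g2) (src _) (embL g1 g2 a) :=
  .head (.inr <| .inr <| .inl ⟨rfl, rfl⟩) (reach_embL h)

lemma reach_src_embR (b : V g2) (h : Reach g2 (src g2) b) :
    Reach (.par g1 g2) (src _) (embR g1 g2 b) :=
  .head (.inr <| .inr <| .inr <| .inl ⟨rfl, rfl⟩) (reach_embR h)

end Reach

lemma reach_src (g : SP) (v : V g) : Reach g (src g) v := by
  induction g with
  | vert => rcases v with _ | ⟨⟨⟩⟩; exact .refl
  | seq g1 g2 ih1 ih2 =>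
    rcases seq_vertex_cases v with ⟨a, rfl⟩ | ⟨b, rfl⟩
    · exact reach_emb1 (ih1 a)
    · exact (reach_emb1 (ih1 (snk g1))).trans (reach_emb2 (ih2 b))
  | par g1 g2 ih1 ih2 =>
    rcases v with _ | (a | b) | _
    · exact .refl
    · exact reach_src_embL a (ih1 a)
    · exact reach_src_embR b (ih2 b)
    · exact (reach_src_embL _ (ih1 (snk g1))).tail (.inr <| .inr <| .inr <| .inr <| .inl ⟨rfl, rfl⟩)

lemma exists_ancestor_nil (g : SP) (v : V g) :
    ∃ c, fpath g c = [] ∧ depth g c ≤ depth g v ∧ Reach g c v :=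
  ⟨src g, fpath_src g, (depth_src g).symm ▸ Nat.zero_le _, reach_src g v⟩

def HasPrefixAncestors (g : SP) : Prop :=
  ∀ v p, p <+: fpath g v → ∃ c, fpath g c = p ∧ depth g c ≤ depth g v ∧ Reach g c v

namespace HasPrefixAncestors

lemma vert : HasPrefixAncestors .vert := fun v p hp => by
  rw [List.prefix_nil.mp (hp : p <+: [])]
  exact exists_ancestor_nil _ v

lemma seq {g1 g2 : SP} (h1 : HasPrefixAncestors g1) (h2 : HasPrefixAncestors g2) :
    HasPrefixAncestors (.seq g1 g2) := by
  intro v p hp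
  rcases seq_vertex_cases v with ⟨a, rfl⟩ | ⟨b, rfl⟩
  · obtain ⟨c, rfl, hdc, hrc⟩ := h1 a p (fpath_emb1 g1 g2 a ▸ hp)
    refine ⟨emb1 g1 g2 c, fpath_emb1 .., ?_, reach_emb1 hrc⟩
    rwa [depth_emb1, depth_emb1]
  · obtain ⟨c, rfl, hdc, hrc⟩ := h2 b p (fpath_emb2 g1 g2 b ▸ hp)
    refine ⟨emb2 g1 g2 c, fpath_emb2 .., ?_, reach_emb2 hrc⟩
    rw [depth_emb2, depth_emb2]
    exact Nat.add_le_add_left hdc _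

lemma par {g1 g2 : SP} (h1 : HasPrefixAncestors g1) (h2 : HasPrefixAncestors g2) :
    HasPrefixAncestors (.par g1 g2) := by
  rintro v (_ | ⟨x, q⟩) hp
  · exact exists_ancestor_nil _ v
  rcases v with _ | (a | b) | _
  · exact absurd (List.prefix_nil.mp (hp : x :: q <+: [])) (List.cons_ne_nil _ _)
  · obtain ⟨rfl, hq⟩ := List.cons_prefix_cons.mp (hp : x :: q <+: false :: fpath g1 a)
    obtain ⟨c, rfl, hdc, hrc⟩ := h1 a q hq
    exact ⟨embL g1 g2 c, rfl, Nat.add_le_add_left hdc 1, reach_embL hrc⟩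
  · obtain ⟨rfl, hq⟩ := List.cons_prefix_cons.mp (hp : x :: q <+: true :: fpath g2 b)
    obtain ⟨c, rfl, hdc, hrc⟩ := h2 b q hq
    exact ⟨embR g1 g2 c, rfl, Nat.add_le_add_left hdc 1, reach_embR hrc⟩
  · exact absurd (List.prefix_nil.mp (hp : x :: q <+: [])) (List.cons_ne_nil _ _)

end HasPrefixAncestors

theorem hasPrefixAncestors (g : SP) : HasPrefixAncestors g := by
  induction g with
  | vert => exact .vert
  | seq _ _ ih1 ih2 => exact ih1.seq ih2
  | par _ _ ih1 ih2 => exact ih1.par ih2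

/-- for every vertex `v` and every prefix `p` of `f(v)`, there is
a vertex `c` with `f(c) = p`, `d(c) ≤ d(v)`, and `c ≼ v`. -/
theorem exists_ancestor_with_prefix (g : SP) (v : V g) (p : List Bool)
    (hp : p <+: fpath g v) :
    ∃ c : V g, fpath g c = p ∧ depth g c ≤ depth g v ∧ Reach g c v :=
  hasPrefixAncestors g v p hp
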